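/- arXiv:1606.07799 — 5 statements merged into one kernel-verified Lean document; each statement's English description precedes it below -/
import Mathlib

section
/- Two finitely generated graded right A(f)-submodules of the graded quotient ring Q_gr(A(f)) are isomorphic as graded right A(f)-modules if and only if they have the same sequence of structure constants. -/
open Polynomial

noncomputable section

/-- `shiftp k d g = σ^d(g)`, i.e. `g(z + d)`, where `σ(z) = z + 1`. -/
def shiftp (k : Type) [Field k] (d : ℤ) (g : Polynomial k) : Polynomial k :=
  g.comp (X + C (d : k))

/-- The canonical `k[z]`-module generator of the degree-`d` component of `A(f)` inside
`Q_gr(A(f)) = k(z)[x,x⁻¹;σ]`:  `1` for `d ≥ 0` and `σ⁻¹(f)⋯σ^{d}(f)` for `d < 0`. -/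
def acoef (k : Type) [Field k] (f : Polynomial k) (d : ℤ) : Polynomial k :=
  if 0 ≤ d then 1 else ∏ i ∈ Finset.range (-d).toNat, shiftp k (-(i + 1)) f

/-- A finitely generated graded right `A(f)`-submodule `I = ⊕ᵢ (aᵢ)xⁱ` of the graded
quotient ring `Q_gr(A(f)) = k(z)[x,x⁻¹;σ]`, recorded by its coefficient sequence
`a : ℤ → k(z)` together with its sequence of structure constants
`c i = ` the monic generator of `(aᵢ aᵢ₊₁⁻¹) ⊆ k[z]`.
* `closed_x` expresses `(aᵢ)xⁱ · x ⊆ (aᵢ₊₁)xⁱ⁺¹`, i.e. `(aᵢ) ⊆ (aᵢ₊₁)`;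
* `closed_y` expresses `(aᵢ₊₁)xⁱ⁺¹ · y ⊆ (aᵢ)xⁱ`, i.e. `(aᵢ₊₁ σⁱ(f)) ⊆ (aᵢ)`;
* `fg` expresses that `I` is generated as a right `A(f)`-module by finitely many
  homogeneous elements `m x^d` (recorded as pairs `(d, m)`), using that the degree-`n`
  coefficient of `m x^d · A(f)` is the `k[z]`-ideal generated by `m·σ^d(acoef f (n-d))`. -/
structure GrSubmod (k : Type) [Field k] (f : Polynomial k) where
  a : ℤ → RatFunc k
  c : ℤ → Polynomial k
  nonzero : ∀ i, a i ≠ 0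
  closed_x : ∀ i, ∃ p : Polynomial k,
    a i = algebraMap (Polynomial k) (RatFunc k) p * a (i + 1)
  closed_y : ∀ i, ∃ p : Polynomial k,
    a (i + 1) * algebraMap (Polynomial k) (RatFunc k) (shiftp k i f) =
      algebraMap (Polynomial k) (RatFunc k) p * a i
  fg : ∃ s : Finset (ℤ × RatFunc k),
    (∀ q ∈ s, ∃ p : Polynomial k,
      q.2 = algebraMap (Polynomial k) (RatFunc k) p * a q.1) ∧
    ∀ (n : ℤ) (r : RatFunc k),
      (∃ p : Polynomial k, r = algebraMap (Polynomial k) (RatFunc k) p * a n) →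
      r ∈ Submodule.span (Polynomial k)
        ((fun q : ℤ × RatFunc k =>
          q.2 * algebraMap (Polynomial k) (RatFunc k) (shiftp k q.1 (acoef k f (n - q.1)))) '' s)
  monic : ∀ i, (c i).Monic
  gen : ∀ i, ∃ u : k, u ≠ 0 ∧
    a i = algebraMap (Polynomial k) (RatFunc k) (Polynomial.C u * c i) * a (i + 1)

/-- The degree-`n` component of `I = ⊕ᵢ(aᵢ)xⁱ`, as a set of coefficients: the `k[z]`-ideal
of `k(z)` generated by `aₙ`. -/
def comp (k : Type) [Field k] (a : ℤ → RatFunc k) (n : ℤ) : Set (RatFunc k) :=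
  {r | ∃ p : Polynomial k, r = algebraMap (Polynomial k) (RatFunc k) p * a n}

/-- `φ` is a graded right `A(f)`-module homomorphism of degree `0` from `I = ⊕(aᵢ)xⁱ` to
`J = ⊕(bᵢ)xⁱ`, recorded on coefficients: `φ n` maps the degree-`n` coefficient ideal of
`I` to that of `J`, is `k`-linear, and commutes with the right actions of `z`, `x`, and
`y` (on the degree-`n` component these are, respectively, coefficient multiplication by
`σⁿ(z) = z+n`, the identity inclusion `(aₙ) ⊆ (aₙ₊₁)`, and multiplication by
`σ^{n-1}(f)` landing in degree `n-1`). -/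
def IsGrHom (k : Type) [Field k] (f : Polynomial k)
    (I J : GrSubmod k f) (φ : ℤ → RatFunc k → RatFunc k) : Prop :=
  (∀ n, Set.MapsTo (φ n) (comp k I.a n) (comp k J.a n)) ∧
  (∀ n, ∀ r ∈ comp k I.a n, ∀ r' ∈ comp k I.a n, φ n (r + r') = φ n r + φ n r') ∧
  (∀ n, ∀ r ∈ comp k I.a n, ∀ t : k, φ n (t • r) = t • φ n r) ∧
  (∀ n, ∀ r ∈ comp k I.a n,
    φ n (algebraMap (Polynomial k) (RatFunc k) (X + C (n : k)) * r) =
      algebraMap (Polynomial k) (RatFunc k) (X + C (n : k)) * φ n r) ∧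
  (∀ n, ∀ r ∈ comp k I.a n, φ (n + 1) r = φ n r) ∧
  (∀ n, ∀ r ∈ comp k I.a n,
    φ (n - 1) (r * algebraMap (Polynomial k) (RatFunc k) (shiftp k (n - 1) f)) =
      φ n r * algebraMap (Polynomial k) (RatFunc k) (shiftp k (n - 1) f))

/-!
An isomorphism of graded submodules of `Q_gr(A(f))` commutes with multiplication by `k[z]` in
each degree, so it sends the generator `aₙ` of the degree-`n` component of `I` to a nonzero
scalar multiple of the generator `bₙ` of that of `J`. Evaluating it on `aᵢ = u cᵢ aᵢ₊₁` in
degrees `i` and `i + 1`, and comparing with `bᵢ = v dᵢ bᵢ₊₁`, shows that the structure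
constants `cᵢ` and `dᵢ` differ by a nonzero scalar, hence agree since both are monic.
Conversely, equal structure constants make `aₙ λ` a nonzero scalar multiple of `bₙ` for
`λ = b₀ / a₀` and every `n`, so right multiplication by `λ` is the isomorphism.
-/

section GradedSubmodules

variable {k : Type} [Field k]

local notation "ι" => algebraMap (Polynomial k) (RatFunc k)

lemma algebraMap_C_mul (t : k) (r : RatFunc k) : ι (C t) * r = t • r := by
  rw [RatFunc.smul_eq_C_mul, ← RatFunc.algebraMap_C]

lemma Polynomial.Monic.eq_of_C_mul_eq_C_mul {p q : Polynomial k} (hp : p.Monic) (hq : q.Monic)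
    {u v : k} (hu : u ≠ 0) (h : C u * p = C v * q) : p = q := by
  have huv : u = v := by
    simpa [hp.leadingCoeff, hq.leadingCoeff] using congrArg Polynomial.leadingCoeff h
  subst huv
  exact mul_left_cancel₀ (C_ne_zero.mpr hu) h

lemma exists_smul_eq_iff_of_eq_smul_mul {x x' y y' c : RatFunc k} {u v : k} (hc : c ≠ 0)
    (hu : u ≠ 0) (hv : v ≠ 0) (hx : x = u • (c * x')) (hy : y = v • (c * y')) :
    (∃ s : k, s ≠ 0 ∧ x = s • y) ↔ ∃ s : k, s ≠ 0 ∧ x' = s • y' := by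
  subst hx hy
  constructor
  · rintro ⟨s, hs, h⟩
    refine ⟨u⁻¹ * s * v, by simp [hu, hv, hs], mul_left_cancel₀ hc ?_⟩
    rw [mul_smul_comm, mul_smul, mul_smul, ← h, inv_smul_smul₀ hu]
  · rintro ⟨s, hs, rfl⟩
    refine ⟨u * s * v⁻¹, by simp [hu, hv, hs], ?_⟩
    rw [mul_smul_comm, smul_smul, smul_smul, inv_mul_cancel_right₀ hv]

section comp

variable {a b : ℤ → RatFunc k} {n : ℤ} {r : RatFunc k}

lemma self_mem_comp : a n ∈ comp k a n := ⟨1, by simp⟩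

lemma algebraMap_mul_mem_comp (p : Polynomial k) (hr : r ∈ comp k a n) :
    ι p * r ∈ comp k a n := by
  obtain ⟨q, rfl⟩ := hr
  exact ⟨p * q, by rw [map_mul, mul_assoc]⟩

lemma smul_mem_comp (t : k) (hr : r ∈ comp k a n) : t • r ∈ comp k a n := by
  rw [← algebraMap_C_mul]
  exact algebraMap_mul_mem_comp _ hr

lemma bijOn_mul_right_comp {l : RatFunc k} (hl : l ≠ 0) {s : k} (hs : s ≠ 0)
    (h : a n * l = s • b n) : Set.BijOn (· * l) (comp k a n) (comp k b n) := by
  refine ⟨?_, fun _ _ _ _ => mul_right_cancel₀ hl, ?_⟩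
  · rintro _ ⟨p, rfl⟩
    exact ⟨p * C s, by simp only [mul_assoc, h, map_mul, algebraMap_C_mul]⟩
  · rintro _ ⟨q, rfl⟩
    refine ⟨ι (C s⁻¹ * q) * a n, ⟨_, rfl⟩, ?_⟩
    simp only [map_mul, mul_assoc, h, algebraMap_C_mul, mul_smul_comm]
    rw [smul_mul_assoc, smul_smul, mul_inv_cancel₀ hs, one_smul]

end comp

variable {f : Polynomial k}

namespace GrSubmod

lemma exists_a_eq_smul (I : GrSubmod k f) (i : ℤ) :
    ∃ u : k, u ≠ 0 ∧ I.a i = u • (ι (I.c i) * I.a (i + 1)) := by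
  obtain ⟨u, hu, h⟩ := I.gen i
  exact ⟨u, hu, by rw [h, map_mul, mul_assoc, algebraMap_C_mul]⟩

lemma exists_mul_eq_smul_of_c_eq {I J : GrSubmod k f} (hc : ∀ i, I.c i = J.c i) (n : ℤ) :
    ∃ s : k, s ≠ 0 ∧ I.a n * (J.a 0 / I.a 0) = s • J.a n := by
  have step : ∀ m, (∃ s : k, s ≠ 0 ∧ I.a m * (J.a 0 / I.a 0) = s • J.a m) ↔
      ∃ s : k, s ≠ 0 ∧ I.a (m + 1) * (J.a 0 / I.a 0) = s • J.a (m + 1) := by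
    intro m
    obtain ⟨u, hu, hI⟩ := I.exists_a_eq_smul m
    obtain ⟨v, hv, hJ⟩ := J.exists_a_eq_smul m
    exact exists_smul_eq_iff_of_eq_smul_mul (RatFunc.algebraMap_ne_zero (I.monic m).ne_zero)
      hu hv (by rw [hI, smul_mul_assoc, mul_assoc]) (by rw [hJ, hc])
  induction n using Int.induction_on with
  | zero => exact ⟨1, one_ne_zero, by rw [one_smul, mul_div_cancel₀ _ (I.nonzero 0)]⟩
  | succ m ih => exact (step m).mp ih
  | pred m ih => exact (step (-m - 1)).mpr (by rwa [sub_add_cancel])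

end GrSubmod

namespace IsGrHom

variable {I J : GrSubmod k f} {φ : ℤ → RatFunc k → RatFunc k} {n : ℤ} {r : RatFunc k}

lemma map_X_mul (h : IsGrHom k f I J φ) (hr : r ∈ comp k I.a n) :
    φ n (ι X * r) = ι X * φ n r := by
  obtain ⟨-, hadd, hsmul, hz, -, -⟩ := h
  have hXn := hz n r hr
  rw [map_add, add_mul, add_mul, algebraMap_C_mul, algebraMap_C_mul,
    hadd n _ (algebraMap_mul_mem_comp X hr) _ (smul_mem_comp _ hr), hsmul n r hr] at hXn
  exact add_right_cancel hXn

lemma map_algebraMap_mul (h : IsGrHom k f I J φ) (p : Polynomial k) (hr : r ∈ comp k I.a n) :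
    φ n (ι p * r) = ι p * φ n r := by
  induction p using Polynomial.induction_on with
  | C t => rw [algebraMap_C_mul, algebraMap_C_mul, h.2.2.1 n r hr]
  | add p q hp hq =>
    rw [map_add, add_mul, add_mul, h.2.1 n _ (algebraMap_mul_mem_comp p hr) _
      (algebraMap_mul_mem_comp q hr), hp, hq]
  | monomial m t ih =>
    have hX : ∀ s, ι (C t * X ^ (m + 1)) * s = ι X * (ι (C t * X ^ m) * s) := by
      intro s
      simp only [map_mul, map_pow]
      ring
    rw [hX, hX, h.map_X_mul (algebraMap_mul_mem_comp _ hr), ih]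

lemma exists_map_a_eq_smul (h : IsGrHom k f I J φ)
    (hsurj : Set.SurjOn (φ n) (comp k I.a n) (comp k J.a n)) :
    ∃ t : k, t ≠ 0 ∧ φ n (I.a n) = t • J.a n := by
  obtain ⟨q, hq⟩ := h.1 n self_mem_comp
  obtain ⟨_, ⟨p, rfl⟩, hp⟩ := hsurj (self_mem_comp (a := J.a))
  rw [h.map_algebraMap_mul p self_mem_comp, hq, ← mul_assoc, ← map_mul] at hp
  have hpq : p * q = 1 := by
    apply IsFractionRing.injective (Polynomial k) (RatFunc k)
    simpa using mul_right_cancel₀ (J.nonzero n) (hp.trans (one_mul _).symm)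
  obtain ⟨t, ht, rfl⟩ := Polynomial.isUnit_iff.mp (IsUnit.of_mul_eq_one_right p hpq)
  exact ⟨t, ht.ne_zero, by rw [hq, algebraMap_C_mul]⟩

lemma c_eq (h : IsGrHom k f I J φ) (hsurj : ∀ n, Set.SurjOn (φ n) (comp k I.a n) (comp k J.a n))
    (i : ℤ) : I.c i = J.c i := by
  obtain ⟨u, hu, hI⟩ := I.exists_a_eq_smul i
  obtain ⟨v, -, hJ⟩ := J.exists_a_eq_smul i
  obtain ⟨t, -, ht⟩ := h.exists_map_a_eq_smul (hsurj i)
  obtain ⟨t', ht'0, ht'⟩ := h.exists_map_a_eq_smul (hsurj (i + 1))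
  have hφ : φ i (I.a i) = φ (i + 1) (I.a i) := (h.2.2.2.2.1 i _ self_mem_comp).symm
  rw [ht, hJ, hI, h.2.2.1 _ _ (algebraMap_mul_mem_comp _ self_mem_comp),
    h.map_algebraMap_mul _ self_mem_comp, ht'] at hφ
  refine (I.monic i).eq_of_C_mul_eq_C_mul (J.monic i) (mul_ne_zero hu ht'0) (v := t * v) ?_
  apply IsFractionRing.injective (Polynomial k) (RatFunc k)
  apply mul_right_cancel₀ (J.nonzero (i + 1))
  simp only [map_mul, mul_assoc, algebraMap_C_mul, mul_smul_comm, smul_smul] at hφ ⊢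
  rw [smul_mul_assoc, smul_mul_assoc, mul_comm t', mul_comm v, hφ]

end IsGrHom

lemma isGrHom_mul_right {I J : GrSubmod k f} (l : RatFunc k)
    (hl : ∀ n, Set.MapsTo (· * l) (comp k I.a n) (comp k J.a n)) :
    IsGrHom k f I J (fun _ r => r * l) :=
  ⟨hl, fun _ _ _ _ _ => add_mul _ _ _, fun _ _ _ _ => smul_mul_assoc _ _ _,
    fun _ _ _ => mul_assoc _ _ _, fun _ _ _ => rfl, fun _ _ _ => mul_right_comm _ _ _⟩

end GradedSubmodules

/-- Two finitely generated graded right `A(f)`-submodules of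
`Q_gr(A(f))` are isomorphic as graded right `A(f)`-modules if and only if they have the
same sequence of structure constants.  Here `f = z(z+α)`. -/
theorem iso_iff_same_structure_constants (k : Type) [Field k] (α : k)
    (I J : GrSubmod k (X * (X + C α))) :
    (∃ φ : ℤ → RatFunc k → RatFunc k,
      IsGrHom k (X * (X + C α)) I J φ ∧
      ∀ n, Set.BijOn (φ n) (comp k I.a n) (comp k J.a n)) ↔
    ∀ i, I.c i = J.c i := by
  constructor
  · rintro ⟨φ, hφ, hbij⟩
    exact hφ.c_eq fun n => (hbij n).surjOn
  · intro hc
    have hbij : ∀ n, Set.BijOn (· * (J.a 0 / I.a 0)) (comp k I.a n) (comp k J.a n) := fun n =>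
      have ⟨_, hs, h⟩ := GrSubmod.exists_mul_eq_smul_of_c_eq hc n
      bijOn_mul_right_comp (div_ne_zero (J.nonzero 0) (I.nonzero 0)) hs h
    exact ⟨_, isGrHom_mul_right _ fun n => (hbij n).mapsTo, hbij⟩

end
end

section
/- Let I be a finitely generated graded right A(f)-submodule of Q_gr(A(f)) with structure constants {c_i}. Then for all sufficiently large n, c_n = 1 and c_{−n} = σ^{−n}(f). -/
open Polynomial

noncomputable section

/-!
Since `k(z)` is commutative, the closure conditions give `(a_d) ⊆ (aₙ)` for `d ≤ n`, and
`σ^{d-1}(f) ⋯ σⁿ(f) · (a_d) ⊆ σⁿ(f) · (aₙ₊₁)` for `d > n`. Once `n` exceeds the degrees of the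
finitely many generators, `aₙ₊₁` is generated by elements of `(aₙ) = (cₙ aₙ₊₁)`, so `cₙ` is a
unit; and `a₋ₙ = u c₋ₙ a₋ₙ₊₁` is generated by elements of `σ⁻ⁿ(f) · (a₋ₙ₊₁)`, so
`σ⁻ⁿ(f) ∣ c₋ₙ`, while `c₋ₙ ∣ σ⁻ⁿ(f)` holds in every degree by the `y`-closure. Both being monic,
they are equal.
-/

theorem dvd_of_smul_mem_span_singleton_smul {R M : Type*} [CommRing R] [IsDomain R]
    [AddCommGroup M] [Module R M] [Module.IsTorsionFree R M] {x : M} (hx : x ≠ 0) {a b : R}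
    (h : b • x ∈ R ∙ (a • x)) : a ∣ b := by
  obtain ⟨t, ht⟩ := Submodule.mem_span_singleton.mp h
  rw [smul_smul] at ht
  exact Dvd.intro_left t (smul_left_injective R hx ht)

section Shift

variable {k : Type} [Field k]

theorem shiftp_shiftp (d e : ℤ) (g : k[X]) : shiftp k d (shiftp k e g) = shiftp k (d + e) g := by
  simp only [shiftp, comp_assoc, add_comp, X_comp, C_comp, Int.cast_add, C_add, add_assoc]

theorem shiftp_prod {ι : Type*} (d : ℤ) (t : Finset ι) (g : ι → k[X]) :
    shiftp k d (∏ i ∈ t, g i) = ∏ i ∈ t, shiftp k d (g i) := by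
  simp only [shiftp, comp_eq_aeval, map_prod]

theorem shiftp_acoef_neg (f : k[X]) (n : ℤ) (t : ℕ) :
    shiftp k (n + t) (acoef k f (-t)) = ∏ i ∈ Finset.range t, shiftp k (n + i) f := by
  rcases t.eq_zero_or_pos with rfl | ht
  · simp [acoef, shiftp]
  rw [acoef, if_neg (by omega), neg_neg, Int.toNat_natCast, shiftp_prod,
    ← Finset.prod_range_reflect]
  refine Finset.prod_congr rfl fun i hi => ?_
  rw [shiftp_shiftp]
  congr 1
  have := Finset.mem_range.mp hi
  push_cast [Nat.cast_sub (by omega : 1 ≤ t), Nat.cast_sub (by omega : i ≤ t - 1)]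
  ring

end Shift

namespace GrSubmod

variable {k : Type} [Field k] {f : k[X]} (I : GrSubmod k f)

def component (n : ℤ) : Submodule k[X] (RatFunc k) := k[X] ∙ I.a n

theorem mem_component {n : ℤ} {r : RatFunc k} :
    r ∈ I.component n ↔ ∃ p : k[X], r = algebraMap k[X] (RatFunc k) p * I.a n := by
  simp only [component, Submodule.mem_span_singleton, Algebra.smul_def, eq_comm]

theorem component_mono : Monotone I.component :=
  monotone_int_of_le_succ fun i => by
    obtain ⟨p, hp⟩ := I.closed_x i
    exact (Submodule.span_singleton_le_iff_mem _ _).mpr (I.mem_component.mpr ⟨p, hp⟩)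

theorem component_eq (n : ℤ) : I.component n = k[X] ∙ (I.c n • I.a (n + 1)) := by
  obtain ⟨u, hu, hgen⟩ := I.gen n
  rw [component, hgen, ← Algebra.smul_def, mul_smul,
    Submodule.span_singleton_smul_eq (isUnit_C.mpr hu.isUnit)]

theorem shiftp_smul_a_succ_mem (i : ℤ) : shiftp k i f • I.a (i + 1) ∈ I.component i := by
  obtain ⟨p, hp⟩ := I.closed_y i
  rw [mem_component, Algebra.smul_def, mul_comm]
  exact ⟨p, hp⟩

theorem c_dvd_shiftp (i : ℤ) : I.c i ∣ shiftp k i f := by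
  have h := I.shiftp_smul_a_succ_mem i
  rw [component_eq] at h
  exact dvd_of_smul_mem_span_singleton_smul (I.nonzero _) h

theorem prod_shiftp_smul_a_mem (j : ℤ) (t : ℕ) :
    (∏ i ∈ Finset.range t, shiftp k (j + i) f) • I.a (j + t) ∈ I.component j := by
  induction t with
  | zero => simp [component, Submodule.mem_span_singleton_self]
  | succ t ih =>
    have hstep := I.shiftp_smul_a_succ_mem (j + t)
    obtain ⟨p, hp⟩ := Submodule.mem_span_singleton.mp hstep
    rw [Finset.prod_range_succ, mul_smul, Nat.cast_succ, ← add_assoc, ← hp, smul_comm]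
    exact Submodule.smul_mem _ p ih

theorem mul_shiftp_acoef_mem_of_le {d n : ℤ} (hdn : d ≤ n) {x : RatFunc k}
    (hx : x ∈ I.component d) :
    x * algebraMap k[X] (RatFunc k) (shiftp k d (acoef k f (n + 1 - d))) ∈ I.component n := by
  have hac : acoef k f (n + 1 - d) = 1 := if_pos (by omega)
  rw [hac, shiftp, one_comp, map_one, mul_one]
  exact I.component_mono hdn hx

theorem mul_shiftp_acoef_mem_of_lt {n d : ℤ} (hnd : n < d) {x : RatFunc k}
    (hx : x ∈ I.component d) :
    x * algebraMap k[X] (RatFunc k) (shiftp k d (acoef k f (n - d))) ∈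
      k[X] ∙ (shiftp k n f • I.a (n + 1)) := by
  obtain ⟨t, rfl⟩ := Int.exists_add_of_le hnd
  obtain ⟨p, rfl⟩ := Submodule.mem_span_singleton.mp hx
  obtain ⟨r, hr⟩ := Submodule.mem_span_singleton.mp (I.prod_shiftp_smul_a_mem (n + 1) t)
  have hsh : shiftp k (n + 1 + t) (acoef k f (n - (n + 1 + t))) =
      (∏ i ∈ Finset.range t, shiftp k (n + 1 + i) f) * shiftp k n f := by
    have hnt : n + 1 + (t : ℤ) = n + (t + 1 : ℕ) := by push_cast; ring
    rw [hnt, sub_add_cancel_left, shiftp_acoef_neg, Finset.prod_range_succ']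
    simp only [Nat.cast_succ, Nat.cast_zero, add_zero, add_assoc, add_comm (1 : ℤ)]
  refine Submodule.mem_span_singleton.mpr ⟨p * r, ?_⟩
  rw [hsh, mul_smul, smul_comm r, hr]
  simp only [Algebra.smul_def, map_mul]
  ring

theorem c_eq_one_of_generators_le {s : Finset (ℤ × RatFunc k)}
    (hs : ∀ q ∈ s, q.2 ∈ I.component q.1)
    {n : ℤ} (hn : I.a (n + 1) ∈ Submodule.span k[X]
      ((fun q : ℤ × RatFunc k => q.2 *
        algebraMap k[X] (RatFunc k) (shiftp k q.1 (acoef k f (n + 1 - q.1)))) '' s))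
    (hle : ∀ q ∈ s, q.1 ≤ n) : I.c n = 1 := by
  have hspan : (1 : k[X]) • I.a (n + 1) ∈ k[X] ∙ (I.c n • I.a (n + 1)) := by
    rw [one_smul, ← component_eq]
    refine Submodule.span_le.mpr ?_ hn
    rintro _ ⟨q, hq, rfl⟩
    exact I.mul_shiftp_acoef_mem_of_le (hle q hq) (hs q hq)
  exact (I.monic n).eq_one_of_isUnit
    (isUnit_of_dvd_one (dvd_of_smul_mem_span_singleton_smul (I.nonzero _) hspan))

theorem c_eq_shiftp_of_lt_generators (hf : f.Monic) {s : Finset (ℤ × RatFunc k)}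
    (hs : ∀ q ∈ s, q.2 ∈ I.component q.1)
    {n : ℤ} (hn : I.a n ∈ Submodule.span k[X]
      ((fun q : ℤ × RatFunc k => q.2 *
        algebraMap k[X] (RatFunc k) (shiftp k q.1 (acoef k f (n - q.1)))) '' s))
    (hlt : ∀ q ∈ s, n < q.1) : I.c n = shiftp k n f := by
  have hspan : I.a n ∈ k[X] ∙ (shiftp k n f • I.a (n + 1)) := by
    refine Submodule.span_le.mpr ?_ hn
    rintro _ ⟨q, hq, rfl⟩
    exact I.mul_shiftp_acoef_mem_of_lt (hlt q hq) (hs q hq)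
  rw [← Submodule.span_singleton_le_iff_mem, ← component, component_eq] at hspan
  have hdvd := dvd_of_smul_mem_span_singleton_smul (I.nonzero _)
    (hspan (Submodule.mem_span_singleton_self _))
  exact eq_of_monic_of_associated (I.monic n) (hf.comp_X_add_C _)
    (associated_of_dvd_dvd (I.c_dvd_shiftp n) hdvd)

end GrSubmod

/-- If `I` is a finitely generated graded right `A(f)`-submodule of
`Q_gr(A(f))` with structure constants `{cᵢ}` (here `f = z(z+α)` is quadratic), then for
all sufficiently large `n` one has `cₙ = 1` and `c₋ₙ = σ⁻ⁿ(f)`. -/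
theorem structure_constants_eventually (k : Type) [Field k] (α : k)
    (I : GrSubmod k (X * (X + C α))) :
    ∃ N : ℕ, ∀ n : ℕ, N ≤ n →
      I.c (n : ℤ) = 1 ∧ I.c (-(n : ℤ)) = shiftp k (-(n : ℤ)) (X * (X + C α)) := by
  obtain ⟨s, hs, hspan⟩ := I.fg
  have hs' : ∀ q ∈ s, q.2 ∈ I.component q.1 := fun q hq => I.mem_component.mpr (hs q hq)
  refine ⟨s.sup (fun q => q.1.natAbs) + 1, fun n hn => ?_⟩
  have hbound : ∀ q ∈ s, q.1.natAbs < n := fun q hq =>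
    (Finset.le_sup (f := fun q : ℤ × RatFunc k => q.1.natAbs) hq).trans_lt hn
  constructor
  · refine I.c_eq_one_of_generators_le hs' (hspan _ _ ⟨1, by simp⟩) fun q hq => ?_
    have := hbound q hq
    omega
  · refine I.c_eq_shiftp_of_lt_generators (monic_X.mul (monic_X_add_C α)) hs'
      (hspan _ _ ⟨1, by simp⟩) fun q hq => ?_
    have := hbound q hq
    omega

end
end

section
/- Let α = 0, f = z². In gr A(f), the module A/zA is a nonsplit extension of X = A/(x,z)A by Y = (A/(y,z−1)A)⟨1⟩: there is a short exact sequence 0 → Y → A/zA → X → 0 given by left multiplication by x, and this sequence does not split. -/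
open Polynomial

noncomputable section

/-- The defining relations of the generalized Weyl algebra `A(f)` over `k[z]` with
`σ(z) = z + 1`: `xz = σ(z)x`, `yz = σ⁻¹(z)y`, `xy = f`, `yx = σ⁻¹(f)`.
Generators: `0 ↦ x`, `1 ↦ y`, `2 ↦ z`. -/
inductive gwaRel (k : Type) [Field k] (f : Polynomial k) :
    FreeAlgebra k (Fin 3) → FreeAlgebra k (Fin 3) → Prop
  | xz : gwaRel k f (FreeAlgebra.ι k 0 * FreeAlgebra.ι k 2)
      ((FreeAlgebra.ι k 2 + 1) * FreeAlgebra.ι k 0)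
  | yz : gwaRel k f (FreeAlgebra.ι k 1 * FreeAlgebra.ι k 2)
      ((FreeAlgebra.ι k 2 - 1) * FreeAlgebra.ι k 1)
  | xy : gwaRel k f (FreeAlgebra.ι k 0 * FreeAlgebra.ι k 1)
      (aeval (FreeAlgebra.ι k 2) f)
  | yx : gwaRel k f (FreeAlgebra.ι k 1 * FreeAlgebra.ι k 0)
      (aeval (FreeAlgebra.ι k 2) (f.comp (X - 1)))

/-- The generalized Weyl algebra `A(f) = k[z]⟨x,y⟩ / (xz-σ(z)x, yz-σ⁻¹(z)y, xy-f, yx-σ⁻¹(f))`. -/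
abbrev GWA (k : Type) [Field k] (f : Polynomial k) := RingQuot (gwaRel k f)

def gwaX (k : Type) [Field k] (f : Polynomial k) : GWA k f :=
  RingQuot.mkAlgHom k (gwaRel k f) (FreeAlgebra.ι k 0)

def gwaY (k : Type) [Field k] (f : Polynomial k) : GWA k f :=
  RingQuot.mkAlgHom k (gwaRel k f) (FreeAlgebra.ι k 1)

def gwaZ (k : Type) [Field k] (f : Polynomial k) : GWA k f :=
  RingQuot.mkAlgHom k (gwaRel k f) (FreeAlgebra.ι k 2)

/-- The canonical `k[z]`-module generator of the degree-`n` component of `A(f)`: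
`xⁿ` for `n ≥ 0` and `y⁻ⁿ` for `n < 0`. -/
def gwaMon (k : Type) [Field k] (f : Polynomial k) (n : ℤ) : GWA k f :=
  if 0 ≤ n then gwaX k f ^ n.toNat else gwaY k f ^ (-n).toNat

/-- `A(z²)`, the multiple root case. -/
abbrev Amul (k : Type) [Field k] : Type := GWA k (X ^ 2)
/-!
Everything is detected by the right `A`-module `V = ⊕_{n ∈ ℤ} k eₙ`, a model of `A/zA`, through
the map `a ↦ e₀ · a`, which kills `zA`.

Injectivity of `x · _ : A/(y, z - 1)A → A/zA`: modulo `(y, z - 1)A` every element of `A` is a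
combination of powers of `x`, because `xᵐ z ≡ (m + 1) xᵐ` and `xᵐ⁺¹ y = xᵐ z²`; and the vectors
`e₀ · xᵐ⁺¹ = eₘ₊₁` are linearly independent.

Non-splitting: a section would give `a ≡ 1 mod (x, z)A` with `a x ∈ zA`. Since `e₁ · A` stays in
the span of the `eₙ` with `n ≥ 1`, the `e₀`-coefficient of `e₀ · a` is `1`, so `(e₀ · a) · x` has
`e₁`-coefficient `1`, whereas `e₀ · (a x) = 0`.
-/

open MulOpposite

theorem Submodule.mul_mem_of_mem_op {R : Type*} [Semiring R] (I : Submodule Rᵐᵒᵖ R) {a : R}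
    (ha : a ∈ I) (b : R) : a * b ∈ I :=
  I.smul_mem (op b) ha

theorem Finsupp.supported_le_comap_of_single_mem {R ι : Type*} [Semiring R] {s : Set ι}
    (φ : (ι →₀ R) →ₗ[R] ι →₀ R) (h : ∀ i ∈ s, φ (Finsupp.single i 1) ∈ supported R R s) :
    supported R R s ≤ (supported R R s).comap φ :=
  (supported_eq_span_single R s).trans_le <| Submodule.span_le.mpr <| by
    rintro _ ⟨i, hi, rfl⟩
    exact h i hi

namespace GWA

variable {k : Type} [Field k] {f : Polynomial k}

theorem induction {P : GWA k f → Prop} (hr : ∀ r, P (algebraMap k _ r)) (hx : P (gwaX k f))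
    (hy : P (gwaY k f)) (hz : P (gwaZ k f)) (hadd : ∀ a b, P a → P b → P (a + b))
    (hmul : ∀ a b, P a → P b → P (a * b)) (a : GWA k f) : P a := by
  obtain ⟨b, rfl⟩ := RingQuot.mkAlgHom_surjective k (gwaRel k f) a
  induction b using FreeAlgebra.induction with
  | grade0 r => rw [AlgHom.commutes]; exact hr r
  | grade1 i => fin_cases i; exacts [hx, hy, hz]
  | mul a b ha hb => rw [map_mul]; exact hmul _ _ ha hb
  | add a b ha hb => rw [map_add]; exact hadd _ _ ha hb

theorem gwaX_mul_gwaZ : gwaX k f * gwaZ k f = (gwaZ k f + 1) * gwaX k f := by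
  simpa only [gwaX, gwaZ, map_mul, map_add, map_one] using
    RingQuot.mkAlgHom_rel k (gwaRel.xz (k := k) (f := f))

theorem gwaX_mul_gwaY : gwaX k f * gwaY k f = aeval (gwaZ k f) f := by
  simpa only [gwaX, gwaY, gwaZ, map_mul, ← aeval_algHom_apply] using
    RingQuot.mkAlgHom_rel k (gwaRel.xy (k := k) (f := f))

theorem gwaX_pow_mul_gwaZ (m : ℕ) : gwaX k f ^ m * gwaZ k f = (gwaZ k f + m) * gwaX k f ^ m := by
  induction m with
  | zero => simp
  | succ m ih =>
    rw [pow_succ, mul_assoc, gwaX_mul_gwaZ, ← mul_assoc, mul_add, mul_one, ih]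
    push_cast
    noncomm_ring

end GWA

namespace Amul

variable (k : Type) [Field k]

local notation "A" => Amul k
local notation "𝐱" => gwaX k (X ^ 2)
local notation "𝐲" => gwaY k (X ^ 2)
local notation "𝐳" => gwaZ k (X ^ 2)

/-- A model of `A/zA` in the basis `eₙ = xⁿ` (`n ≥ 0`), `eₙ = y⁻ⁿ` (`n < 0`); the coefficients
`cx`, `cy` of the action are read off from `xy = z²` and `yx = (z - 1)²`. -/
abbrev V := ℤ →₀ k

def cx (n : ℤ) : k := if 0 ≤ n then 1 else (n : k) ^ 2

def cy (n : ℤ) : k := if 1 ≤ n then ((n : k) - 1) ^ 2 else 1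

def Xhat : V k →ₗ[k] V k := Finsupp.lsum k fun n => cx k n • Finsupp.lsingle (n + 1)

def Yhat : V k →ₗ[k] V k := Finsupp.lsum k fun n => cy k n • Finsupp.lsingle (n - 1)

def Zhat : V k →ₗ[k] V k := Finsupp.lsum k fun n => (n : k) • Finsupp.lsingle n

@[simp] theorem Xhat_single (n : ℤ) (c : k) :
    Xhat k (Finsupp.single n c) = Finsupp.single (n + 1) (cx k n * c) := by
  simp [Xhat]

@[simp] theorem Yhat_single (n : ℤ) (c : k) :
    Yhat k (Finsupp.single n c) = Finsupp.single (n - 1) (cy k n * c) := by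
  simp [Yhat]

@[simp] theorem Zhat_single (n : ℤ) (c : k) :
    Zhat k (Finsupp.single n c) = Finsupp.single n ((n : k) * c) := by
  simp [Zhat]

theorem Xhat_apply_add_one (v : V k) (n : ℤ) : Xhat k v (n + 1) = cx k n * v n := by
  induction v using Finsupp.induction_linear with
  | zero => simp
  | add v w hv hw => simp [hv, hw, mul_add]
  | single m c =>
    simp only [Xhat_single, Finsupp.single_apply, add_left_inj]
    split_ifs with h <;> simp [h]

theorem Zhat_mul_Xhat : Zhat k * Xhat k = Xhat k * (Zhat k + 1) := by
  refine Finsupp.lhom_ext fun n c => ?_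
  simp only [Module.End.mul_apply, LinearMap.add_apply, Module.End.one_apply, Xhat_single,
    Zhat_single, ← Finsupp.single_add]
  push_cast
  ring_nf

theorem Zhat_mul_Yhat : Zhat k * Yhat k = Yhat k * (Zhat k - 1) := by
  refine Finsupp.lhom_ext fun n c => ?_
  simp only [Module.End.mul_apply, LinearMap.sub_apply, Module.End.one_apply, Yhat_single,
    Zhat_single, ← Finsupp.single_sub]
  push_cast
  ring_nf

theorem Yhat_mul_Xhat : Yhat k * Xhat k = Zhat k ^ 2 := by
  refine Finsupp.lhom_ext fun n c => ?_
  simp only [Module.End.mul_apply, pow_two, Xhat_single, Yhat_single, Zhat_single,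
    add_sub_cancel_right, cx, cy]
  congr 1
  split_ifs <;> first | omega | (push_cast; ring)

theorem Xhat_mul_Yhat : Xhat k * Yhat k = (Zhat k - 1) ^ 2 := by
  refine Finsupp.lhom_ext fun n c => ?_
  simp only [Module.End.mul_apply, pow_two, Xhat_single, Yhat_single, LinearMap.sub_apply,
    Module.End.one_apply, Zhat_single, ← Finsupp.single_sub, sub_add_cancel, cx, cy]
  congr 1
  split_ifs <;> first | omega | (push_cast; ring)

def ρ : A →ₐ[k] (Module.End k (V k))ᵐᵒᵖ :=
  RingQuot.liftAlgHom k ⟨FreeAlgebra.lift k ![op (Xhat k), op (Yhat k), op (Zhat k)], by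
    intro a b h
    induction h <;>
      simp only [map_mul, map_add, map_sub, map_one, aeval_comp, map_pow,
        aeval_X, FreeAlgebra.lift_ι_apply, Matrix.cons_val] <;>
      simp only [← op_one, ← op_add, ← op_sub, ← op_mul, ← op_pow, Zhat_mul_Xhat, Zhat_mul_Yhat,
        Yhat_mul_Xhat, Xhat_mul_Yhat]⟩

def act (a : A) : V k →ₗ[k] V k := (ρ k a).unop

theorem act_mul (a b : A) (v : V k) : act k (a * b) v = act k b (act k a v) := by
  simp [act]

theorem act_add (a b : A) (v : V k) : act k (a + b) v = act k a v + act k b v := by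
  simp [act]

theorem act_algebraMap (r : k) (v : V k) : act k (algebraMap k A r) v = r • v := by
  simp [act]

theorem act_one (v : V k) : act k 1 v = v := by
  simp [act]

theorem act_gwaX : act k 𝐱 = Xhat k := by
  simp [act, ρ, gwaX]

theorem act_gwaY : act k 𝐲 = Yhat k := by
  simp [act, ρ, gwaY]

theorem act_gwaZ : act k 𝐳 = Zhat k := by
  simp [act, ρ, gwaZ]

/-- Under `V ≅ A/zA` this is the quotient map. -/
def ev : A →ₗ[k] V k where
  toFun a := act k a (Finsupp.single 0 1)
  map_add' a b := act_add k a b _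
  map_smul' c a := by simp [act]

theorem ev_apply (a : A) : ev k a = act k a (Finsupp.single 0 1) := rfl

theorem ev_mul (a b : A) : ev k (a * b) = act k b (ev k a) := act_mul k a b _

theorem ev_one : ev k 1 = Finsupp.single 0 1 := act_one k _

theorem ev_gwaZ : ev k 𝐳 = 0 := by
  simp [ev_apply, act_gwaZ]

theorem ev_gwaX_pow (m : ℕ) : ev k (𝐱 ^ m) = Finsupp.single (m : ℤ) 1 := by
  induction m with
  | zero => simp [ev_one]
  | succ m ih => simp [pow_succ, ev_mul, ih, act_gwaX, cx]

/-- The image of `x · _ : Y → A/zA`. -/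
def W : Submodule k (V k) := Finsupp.supported k k (Set.Ioi 0)

theorem act_mem_W (a : A) {v : V k} (hv : v ∈ W k) : act k a v ∈ W k := by
  induction a using GWA.induction generalizing v with
  | hr r => rw [act_algebraMap]; exact (W k).smul_mem r hv
  | hx =>
    rw [act_gwaX]
    refine Finsupp.supported_le_comap_of_single_mem _ (fun i hi => ?_) hv
    rw [Xhat_single]
    exact Finsupp.single_mem_supported k _ (by simp at hi ⊢; omega)
  | hy =>
    rw [act_gwaY]
    refine Finsupp.supported_le_comap_of_single_mem _ (fun i hi => ?_) hv
    rw [Yhat_single]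
    rcases eq_or_ne i 1 with rfl | hi1
    · simp [cy]
    · exact Finsupp.single_mem_supported k _ (by simp at hi ⊢; omega)
  | hz =>
    rw [act_gwaZ]
    refine Finsupp.supported_le_comap_of_single_mem _ (fun i hi => ?_) hv
    rw [Zhat_single]
    exact Finsupp.single_mem_supported k _ hi
  | hadd a b ha hb => rw [act_add]; exact add_mem (ha hv) (hb hv)
  | hmul a b ha hb => rw [act_mul]; exact hb (ha hv)

def Ix : Submodule Aᵐᵒᵖ A := Submodule.span Aᵐᵒᵖ {𝐱, 𝐳}

def Iy : Submodule Aᵐᵒᵖ A := Submodule.span Aᵐᵒᵖ {𝐲, 𝐳 - 1}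

def Iz : Submodule Aᵐᵒᵖ A := Submodule.span Aᵐᵒᵖ {𝐳}

theorem ev_eq_zero_of_mem_Iz {a : A} (ha : a ∈ Iz k) : ev k a = 0 := by
  obtain ⟨r, rfl⟩ := Submodule.mem_span_singleton.mp ha
  rw [smul_eq_mul_unop, ev_mul, ev_gwaZ, map_zero]

theorem ev_mem_W_of_mem_Ix {a : A} (ha : a ∈ Ix k) : ev k a ∈ W k := by
  induction ha using Submodule.span_induction with
  | mem g hg =>
    rcases hg with rfl | rfl
    · rw [← pow_one 𝐱, ev_gwaX_pow]
      exact Finsupp.single_mem_supported k 1 (by simp)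
    · rw [ev_gwaZ]; exact zero_mem _
  | zero => rw [map_zero]; exact zero_mem _
  | add a b _ _ ha hb => rw [map_add]; exact add_mem ha hb
  | smul r a _ ha => rw [smul_eq_mul_unop, ev_mul]; exact act_mem_W k _ ha

theorem mul_gwaX_notMem_Iz {a : A} (ha : a - 1 ∈ Ix k) : a * 𝐱 ∉ Iz k := by
  intro hax
  have ha0 : ev k a 0 = 1 := by
    have := (Finsupp.mem_supported' k _).mp (ev_mem_W_of_mem_Ix k ha) 0 (by simp)
    rwa [map_sub, ev_one, Finsupp.sub_apply, Finsupp.single_eq_same, sub_eq_zero] at this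
  have := congrArg (· (0 + 1)) (ev_eq_zero_of_mem_Iz k hax)
  rw [ev_mul, act_gwaX, Xhat_apply_add_one, ha0] at this
  simp [cx] at this

theorem gwaX_mul_gwaY_eq_sq : 𝐱 * 𝐲 = 𝐳 ^ 2 :=
  GWA.gwaX_mul_gwaY.trans (aeval_X_pow _)

theorem Iz_le_Ix : Iz k ≤ Ix k :=
  Submodule.span_mono (by simp)

theorem Iy_le_comap_mulLeft : Iy k ≤ (Iz k).comap (LinearMap.mulLeft Aᵐᵒᵖ 𝐱) := by
  have hz : 𝐳 ∈ Iz k := Submodule.mem_span_singleton_self _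
  refine Submodule.span_le.mpr (Set.pair_subset_iff.mpr ⟨?_, ?_⟩)
  · show 𝐱 * 𝐲 ∈ Iz k
    rw [gwaX_mul_gwaY_eq_sq, pow_two 𝐳]
    exact (Iz k).mul_mem_of_mem_op hz _
  · show 𝐱 * (𝐳 - 1) ∈ Iz k
    rw [mul_sub, GWA.gwaX_mul_gwaZ, add_mul, one_mul, mul_one, add_sub_cancel_right]
    exact (Iz k).mul_mem_of_mem_op hz _

def xpowSpan : Submodule k A := Submodule.span k (Set.range (𝐱 ^ ·))

theorem mul_mem_of_forall_gwaX_pow_mul_mem {g : A}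
    (hg : ∀ m : ℕ, 𝐱 ^ m * g ∈ (Iy k).restrictScalars k ⊔ xpowSpan k) {t : A}
    (ht : t ∈ (Iy k).restrictScalars k ⊔ xpowSpan k) :
    t * g ∈ (Iy k).restrictScalars k ⊔ xpowSpan k := by
  have hle : (Iy k).restrictScalars k ⊔ xpowSpan k ≤
      ((Iy k).restrictScalars k ⊔ xpowSpan k).comap (LinearMap.mulRight k g) :=
    sup_le (fun u hu => Submodule.mem_sup_left ((Iy k).mul_mem_of_mem_op hu g))
      (Submodule.span_le.mpr (by rintro _ ⟨m, rfl⟩; exact hg m))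
  exact hle ht

theorem gwaX_pow_mem_sup (m : ℕ) : 𝐱 ^ m ∈ (Iy k).restrictScalars k ⊔ xpowSpan k :=
  Submodule.mem_sup_right (Submodule.subset_span ⟨m, rfl⟩)

theorem mul_gwaZ_mem_sup {t : A} (ht : t ∈ (Iy k).restrictScalars k ⊔ xpowSpan k) :
    t * 𝐳 ∈ (Iy k).restrictScalars k ⊔ xpowSpan k := by
  refine mul_mem_of_forall_gwaX_pow_mul_mem k (fun m => ?_) ht
  have h : 𝐱 ^ m * 𝐳 = (𝐳 - 1) * 𝐱 ^ m + ((m : k) + 1) • 𝐱 ^ m := by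
    rw [GWA.gwaX_pow_mul_gwaZ, Algebra.smul_def, map_add, map_natCast, map_one, add_mul,
      sub_mul, add_mul, one_mul]
    abel
  rw [h]
  refine add_mem (Submodule.mem_sup_left ?_) (Submodule.smul_mem _ _ (gwaX_pow_mem_sup k m))
  exact (Iy k).mul_mem_of_mem_op (Submodule.subset_span (by simp)) _

theorem Iy_sup_xpowSpan_eq_top : (Iy k).restrictScalars k ⊔ xpowSpan k = ⊤ := by
  refine Submodule.eq_top_iff'.mpr fun a => ?_
  suffices h : ∀ t ∈ (Iy k).restrictScalars k ⊔ xpowSpan k,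
      t * a ∈ (Iy k).restrictScalars k ⊔ xpowSpan k by
    simpa using h 1 (by simpa using gwaX_pow_mem_sup k 0)
  induction a using GWA.induction with
  | hr r =>
    intro t ht
    rw [← Algebra.commutes, ← Algebra.smul_def]
    exact Submodule.smul_mem _ r ht
  | hx =>
    exact fun t => mul_mem_of_forall_gwaX_pow_mul_mem k fun m => by
      rw [← pow_succ]; exact gwaX_pow_mem_sup k _
  | hy =>
    refine fun t => mul_mem_of_forall_gwaX_pow_mul_mem k fun m => ?_
    rcases m with _ | m
    · rw [pow_zero, one_mul]
      exact Submodule.mem_sup_left (Submodule.subset_span (by simp))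
    · rw [pow_succ 𝐱 m, mul_assoc, gwaX_mul_gwaY_eq_sq, pow_two 𝐳, ← mul_assoc]
      exact mul_gwaZ_mem_sup k (mul_gwaZ_mem_sup k (gwaX_pow_mem_sup k m))
  | hz => exact fun t => mul_gwaZ_mem_sup k
  | hadd a b ha hb =>
    intro t ht
    rw [mul_add]
    exact add_mem (ha t ht) (hb t ht)
  | hmul a b ha hb =>
    intro t ht
    rw [← mul_assoc]
    exact hb _ (ha t ht)

theorem eq_zero_of_mem_xpowSpan {u : A} (hu : u ∈ xpowSpan k) (h : ev k (𝐱 * u) = 0) :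
    u = 0 := by
  rw [xpowSpan, ← Finsupp.range_linearCombination] at hu
  obtain ⟨c, rfl⟩ := hu
  have hli : LinearIndependent k (⇑(ev k ∘ₗ LinearMap.mulLeft k 𝐱) ∘ (𝐱 ^ ·)) := by
    have : ⇑(ev k ∘ₗ LinearMap.mulLeft k 𝐱) ∘ (𝐱 ^ ·) =
        fun m : ℕ => Finsupp.single ((m : ℤ) + 1) (1 : k) := by
      funext m
      simp [← pow_succ', ev_gwaX_pow]
    rw [this]
    exact (Finsupp.linearIndependent_single_one k ℤ).comp _ fun m n h => by simpa using h
  rw [linearIndependent_iff.mp hli c (by rwa [← Finsupp.apply_linearCombination]), map_zero]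

theorem mem_Iy_of_gwaX_mul_mem_Iz {a : A} (h : 𝐱 * a ∈ Iz k) : a ∈ Iy k := by
  have ha : a ∈ (Iy k).restrictScalars k ⊔ xpowSpan k := Iy_sup_xpowSpan_eq_top k ▸ trivial
  obtain ⟨t, ht, u, hu, rfl⟩ := Submodule.mem_sup.mp ha
  have hxu : 𝐱 * u ∈ Iz k := by
    simpa [mul_add] using sub_mem h (Iy_le_comap_mulLeft k ht)
  rwa [eq_zero_of_mem_xpowSpan k hu (ev_eq_zero_of_mem_Iz k hxu), add_zero]

def mulX : (A ⧸ Iy k) →ₗ[Aᵐᵒᵖ] A ⧸ Iz k :=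
  (Iy k).mapQ (Iz k) (LinearMap.mulLeft Aᵐᵒᵖ 𝐱) (Iy_le_comap_mulLeft k)

def proj : (A ⧸ Iz k) →ₗ[Aᵐᵒᵖ] A ⧸ Ix k := Submodule.factor (Iz_le_Ix k)

theorem mulX_injective : Function.Injective (mulX k) := by
  refine (injective_iff_map_eq_zero _).mpr fun m hm => ?_
  obtain ⟨a, rfl⟩ := Submodule.Quotient.mk_surjective _ m
  rw [Submodule.Quotient.mk_eq_zero]
  exact mem_Iy_of_gwaX_mul_mem_Iz k ((Submodule.Quotient.mk_eq_zero _).mp hm)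

theorem range_mulX_eq_ker_proj : LinearMap.range (mulX k) = LinearMap.ker (proj k) := by
  ext m
  obtain ⟨a, rfl⟩ := Submodule.Quotient.mk_surjective _ m
  constructor
  · rintro ⟨n, hn⟩
    obtain ⟨b, rfl⟩ := Submodule.Quotient.mk_surjective _ n
    rw [LinearMap.mem_ker, ← hn]
    exact (Submodule.Quotient.mk_eq_zero _).mpr
      ((Ix k).mul_mem_of_mem_op (Submodule.subset_span (Set.mem_insert _ _)) b)
  · intro h
    obtain ⟨r, s, rfl⟩ := Submodule.mem_span_pair.mp ((Submodule.Quotient.mk_eq_zero _).mp h)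
    refine ⟨Submodule.Quotient.mk r.unop, (Submodule.Quotient.eq _).mpr ?_⟩
    have hs : 𝐳 * s.unop ∈ Iz k := (Iz k).mul_mem_of_mem_op (Submodule.mem_span_singleton_self _) _
    simpa [smul_eq_mul_unop] using neg_mem hs

theorem proj_not_split : ¬∃ s : (A ⧸ Ix k) →ₗ[Aᵐᵒᵖ] A ⧸ Iz k, (proj k).comp s = LinearMap.id := by
  rintro ⟨s, hs⟩
  obtain ⟨a, ha⟩ := Submodule.Quotient.mk_surjective _ (s (Submodule.Quotient.mk 1))
  refine mul_gwaX_notMem_Iz k (a := a) ?_ ?_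
  · have h := LinearMap.congr_fun hs (Submodule.Quotient.mk 1)
    rw [LinearMap.comp_apply, ← ha, LinearMap.id_apply] at h
    exact (Submodule.Quotient.eq _).mp h
  · have hx : (Submodule.Quotient.mk 𝐱 : A ⧸ Ix k) = 0 :=
      (Submodule.Quotient.mk_eq_zero _).mpr (Submodule.subset_span (by simp))
    have h : (Submodule.Quotient.mk (a * 𝐱) : A ⧸ Iz k) = s (Submodule.Quotient.mk 𝐱) :=
      calc Submodule.Quotient.mk (a * 𝐱) = op 𝐱 • Submodule.Quotient.mk a := rfl
        _ = s (op 𝐱 • Submodule.Quotient.mk 1) := by rw [ha, map_smul]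
        _ = s (Submodule.Quotient.mk 𝐱) := by
          rw [← Submodule.Quotient.mk_smul, op_smul_eq_mul, one_mul]
    rwa [hx, map_zero, Submodule.Quotient.mk_eq_zero] at h

end Amul

theorem AmodZA_nonsplit_extension_general (k : Type) [Field k] :
    letI A := Amul k
    letI IX : Submodule Aᵐᵒᵖ A :=
      Submodule.span Aᵐᵒᵖ {gwaX k (X ^ 2), gwaZ k (X ^ 2)}
    letI IY : Submodule Aᵐᵒᵖ A :=
      Submodule.span Aᵐᵒᵖ {gwaY k (X ^ 2), gwaZ k (X ^ 2) - 1}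
    letI Iz : Submodule Aᵐᵒᵖ A := Submodule.span Aᵐᵒᵖ {gwaZ k (X ^ 2)}
    ∃ (ι : (A ⧸ IY) →ₗ[Aᵐᵒᵖ] (A ⧸ Iz)) (π : (A ⧸ Iz) →ₗ[Aᵐᵒᵖ] (A ⧸ IX)),
      (∀ a : A, ι (Submodule.Quotient.mk a) =
        Submodule.Quotient.mk (gwaX k (X ^ 2) * a)) ∧
      (∀ a : A, π (Submodule.Quotient.mk a) = Submodule.Quotient.mk a) ∧
      Function.Injective ι ∧ Function.Surjective π ∧
      LinearMap.range ι = LinearMap.ker π ∧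
      ¬∃ s : (A ⧸ IX) →ₗ[Aᵐᵒᵖ] (A ⧸ Iz), π.comp s = LinearMap.id :=
  ⟨Amul.mulX k, Amul.proj k, fun _ => rfl, fun _ => rfl, Amul.mulX_injective k,
    Submodule.factor_surjective (Amul.Iz_le_Ix k), Amul.range_mulX_eq_ker_proj k,
    Amul.proj_not_split k⟩

set_option maxHeartbeats 1000000 in
/-- Let `α = 0`, `f = z²`.  In `gr A(f)`, the module `A/zA` is a nonsplit
extension of `X = A/(x,z)A` by `Y = (A/(y,z−1)A)⟨1⟩`: there is a short exact sequence
`0 → Y → A/zA → X → 0` whose first map is induced by left multiplication by `x` and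
whose second map is the natural quotient map, and this sequence does not split.
(The grading shift `⟨1⟩` does not change the underlying module.) -/
theorem AmodZA_nonsplit_extension (k : Type) [Field k] [IsAlgClosed k] [CharZero k] :
    letI A := Amul k
    letI IX : Submodule Aᵐᵒᵖ A :=
      Submodule.span Aᵐᵒᵖ {gwaX k (X ^ 2), gwaZ k (X ^ 2)}
    letI IY : Submodule Aᵐᵒᵖ A :=
      Submodule.span Aᵐᵒᵖ {gwaY k (X ^ 2), gwaZ k (X ^ 2) - 1}
    letI Iz : Submodule Aᵐᵒᵖ A := Submodule.span Aᵐᵒᵖ {gwaZ k (X ^ 2)}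
    ∃ (ι : (A ⧸ IY) →ₗ[Aᵐᵒᵖ] (A ⧸ Iz)) (π : (A ⧸ Iz) →ₗ[Aᵐᵒᵖ] (A ⧸ IX)),
      (∀ a : A, ι (Submodule.Quotient.mk a) =
        Submodule.Quotient.mk (gwaX k (X ^ 2) * a)) ∧
      (∀ a : A, π (Submodule.Quotient.mk a) = Submodule.Quotient.mk a) ∧
      Function.Injective ι ∧ Function.Surjective π ∧
      LinearMap.range ι = LinearMap.ker π ∧
      ¬∃ s : (A ⧸ IX) →ₗ[Aᵐᵒᵖ] (A ⧸ Iz), π.comp s = LinearMap.id :=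
  AmodZA_nonsplit_extension_general k

end
end

section
/- Let P and Q be finitely generated graded rank one projective modules over A(f) (f = z(z+α) quadratic), embedded in the graded quotient ring Q_gr(A(f)). Then every graded degree-zero A(f)-module homomorphism P → Q is given by left multiplication by an element of k(z), and Hom_{gr A}(P,Q) is a free left k[z]-module of rank one. -/
/-!
Write `mₙ` for `xⁿ` (`n ≥ 0`) or `y⁻ⁿ` (`n < 0`). Since `k[z]` embeds in `A(f)` (it acts
faithfully on `k[X]`, with `x` acting by `p ↦ f · p(X+1)` and `y` by `p ↦ p(X-1)`) and
`mₙ m₋ₙ` is a nonzero polynomial in `z`, any homogeneous `w` and any nonzero homogeneous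
`a = q(z) mₙ` have a common right multiple `w t(z) = a u` with `t ≠ 0`, and homogeneous
elements cannot be killed by `t(z)` on the right. So a graded `φ : P → Q` with
`φ a = q'(z) mₙ` satisfies `q φ(w) = q' w` on homogeneous `w`, hence on all of the graded
ideal `P`. The admissible `q'` form an ideal of `k[z]`, nonzero because it contains `W q` for
any nonzero `W(z) ∈ Q`; its generator `t₁` exhibits `Hom_{gr A}(P, Q) = k[z] · t₁/q`.
-/

open Polynomial

noncomputable section

/-- The degree-`n` component of `A(f)` (as a `k`-subspace): the left `k[z]`-span of the
canonical monomial `mₙ`. -/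
def gwaComp (k : Type) [Field k] (f : Polynomial k) (n : ℤ) : Submodule k (GWA k f) :=
  Submodule.span k {w | ∃ q : Polynomial k, w = aeval (gwaZ k f) q * gwaMon k f n}

/-- A right `A(f)`-module homomorphism between right ideals is graded of degree `0` if it
maps the degree-`n` part of `P` into the degree-`n` part of `Q` for every `n`. -/
def IsGradedHom (k : Type) [Field k] (f : Polynomial k)
    (P Q : Submodule (GWA k f)ᵐᵒᵖ (GWA k f)) (φ : ↥P →ₗ[(GWA k f)ᵐᵒᵖ] ↥Q) : Prop :=
  ∀ (n : ℤ) (m : ↥P), (m : GWA k f) ∈ gwaComp k f n → (φ m : GWA k f) ∈ gwaComp k f n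

theorem SemiconjBy.aeval {R A : Type*} [CommSemiring R] [Semiring A] [Algebra R A] {a b c : A}
    (h : SemiconjBy a b c) (p : R[X]) : SemiconjBy a (aeval b p) (aeval c p) := by
  induction p using Polynomial.induction_on' with
  | add p q hp hq => simpa only [map_add] using hp.add_right hq
  | monomial n r =>
    simpa only [aeval_monomial] using
      SemiconjBy.mul_right (Algebra.commutes r a).symm (h.pow_right n)

theorem aeval_taylor {R A : Type*} [CommSemiring R] [Semiring A] [Algebra R A] (x : A) (r : R)
    (p : R[X]) : aeval x (taylor r p) = aeval (x + algebraMap R A r) p := by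
  simp [taylor_apply, aeval_comp]

theorem aeval_linearMapMul {R A : Type*} [CommSemiring R] [Semiring A] [Algebra R A] (a : A)
    (p : R[X]) : aeval (LinearMap.mul R A a) p = LinearMap.mul R A (aeval a p) := by
  simpa using aeval_algHom_apply (Algebra.lmul R A) a p

theorem pow_mul_aeval_eq_aeval_taylor_mul {R A : Type*} [CommSemiring R] [Semiring A]
    [Algebra R A] {a z : A} {r : R} (h : ∀ p : R[X], a * aeval z p = aeval z (taylor r p) * a)
    (t : ℕ) (p : R[X]) : a ^ t * aeval z p = aeval z (taylor (t * r) p) * a ^ t := by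
  induction t generalizing p with
  | zero => simp
  | succ t ih =>
    rw [pow_succ, mul_assoc, h, ← mul_assoc, ih, taylor_taylor, mul_assoc, ← pow_succ]
    push_cast
    ring_nf

theorem exists_pow_mul_pow_eq_aeval {R A : Type*} [CommRing R] [IsDomain R] [Semiring A]
    [Algebra R A] {a b z : A} {r : R} (h : ∀ p : R[X], a * aeval z p = aeval z (taylor r p) * a)
    {g : R[X]} (hg : g ≠ 0) (hab : a * b = aeval z g) (t : ℕ) :
    ∃ C : R[X], C ≠ 0 ∧ a ^ t * b ^ t = aeval z C := by
  induction t with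
  | zero => exact ⟨1, one_ne_zero, by simp⟩
  | succ t ih =>
    obtain ⟨C, hC, hab_t⟩ := ih
    refine ⟨taylor (t * r) g * C, mul_ne_zero (by simpa using hg) hC, ?_⟩
    rw [pow_succ, pow_succ', mul_assoc, ← mul_assoc a, hab, ← mul_assoc,
      pow_mul_aeval_eq_aeval_taylor_mul h, mul_assoc, hab_t, map_mul]

theorem Submodule.mul_mem_of_mem_op_s16 {A : Type*} [Ring A] {P : Submodule Aᵐᵒᵖ A} {w : A}
    (hw : w ∈ P) (b : A) : w * b ∈ P := by
  simpa using P.smul_mem (MulOpposite.op b) hw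

section GWA

variable {k : Type} [Field k] {f : k[X]}

lemma gwaX_mul_gwaZ : gwaX k f * gwaZ k f = (gwaZ k f + 1) * gwaX k f := by
  simpa [gwaX, gwaZ] using RingQuot.mkAlgHom_rel k (gwaRel.xz (k := k) (f := f))

lemma gwaY_mul_gwaZ : gwaY k f * gwaZ k f = (gwaZ k f - 1) * gwaY k f := by
  simpa [gwaY, gwaZ] using RingQuot.mkAlgHom_rel k (gwaRel.yz (k := k) (f := f))

lemma gwaX_mul_gwaY : gwaX k f * gwaY k f = aeval (gwaZ k f) f := by
  simpa [gwaX, gwaY, gwaZ, aeval_algHom_apply] using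
    RingQuot.mkAlgHom_rel k (gwaRel.xy (k := k) (f := f))

lemma gwaY_mul_gwaX : gwaY k f * gwaX k f = aeval (gwaZ k f) (taylor (-1) f) := by
  simpa [gwaX, gwaY, gwaZ, aeval_algHom_apply, taylor_apply, sub_eq_add_neg] using
    RingQuot.mkAlgHom_rel k (gwaRel.yx (k := k) (f := f))

lemma gwaX_mul_aeval (p : k[X]) :
    gwaX k f * aeval (gwaZ k f) p = aeval (gwaZ k f) (taylor 1 p) * gwaX k f := by
  simpa [aeval_taylor] using (SemiconjBy.aeval (R := k) gwaX_mul_gwaZ p).eq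

lemma gwaY_mul_aeval (p : k[X]) :
    gwaY k f * aeval (gwaZ k f) p = aeval (gwaZ k f) (taylor (-1) p) * gwaY k f := by
  simpa [aeval_taylor, sub_eq_add_neg] using (SemiconjBy.aeval (R := k) gwaY_mul_gwaZ p).eq

def gwaPolyRep : GWA k f →ₐ[k] Module.End k k[X] :=
  RingQuot.liftAlgHom k ⟨FreeAlgebra.lift k
    ![LinearMap.mul k k[X] f * taylor 1, taylor (-1), LinearMap.mul k k[X] X], by
    intro a b h
    induction h <;> refine LinearMap.ext fun p => ?_
    · simp only [Fin.isValue, map_mul, map_add, map_one, FreeAlgebra.lift_ι_apply,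
        Matrix.cons_val_zero, Matrix.cons_val, Module.End.mul_apply, LinearMap.mul_apply_apply,
        taylor_mul, taylor_X, LinearMap.add_apply, Module.End.one_apply]
      ring
    · simp only [Fin.isValue, map_mul, map_sub, map_one, FreeAlgebra.lift_ι_apply,
        Matrix.cons_val_one, Matrix.cons_val_zero, Matrix.cons_val, Module.End.mul_apply,
        LinearMap.mul_apply_apply, taylor_mul, taylor_X, map_neg, LinearMap.sub_apply,
        Module.End.one_apply]
      ring
    · rw [← aeval_algHom_apply]
      simp [aeval_linearMapMul, taylor_taylor]
    · rw [← aeval_algHom_apply, show f.comp (X - 1) = taylor (-1) f by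
        simp [taylor_apply, sub_eq_add_neg]]
      simp [aeval_linearMapMul, taylor_taylor, taylor_mul]⟩

theorem aeval_gwaZ_injective : Function.Injective (aeval (gwaZ k f) : k[X] → GWA k f) := by
  intro p q h
  simpa [← aeval_algHom_apply, gwaPolyRep, gwaZ, aeval_linearMapMul] using
    congrArg (fun a => gwaPolyRep a 1) h

lemma gwaMon_natCast (t : ℕ) : gwaMon k f t = gwaX k f ^ t := by
  simp [gwaMon]

lemma gwaMon_neg_natCast (t : ℕ) : gwaMon k f (-t) = gwaY k f ^ t := by
  simp only [gwaMon, Left.nonneg_neg_iff, Nat.cast_nonpos, neg_neg, Int.toNat_natCast]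
  split_ifs with h <;> simp [h]

lemma gwaMon_mul_aeval (c : ℤ) (p : k[X]) :
    gwaMon k f c * aeval (gwaZ k f) p = aeval (gwaZ k f) (taylor (c : k) p) * gwaMon k f c := by
  obtain ⟨t, rfl | rfl⟩ := Int.eq_nat_or_neg c
  · simpa [gwaMon_natCast] using pow_mul_aeval_eq_aeval_taylor_mul gwaX_mul_aeval t p
  · simpa [gwaMon_neg_natCast] using pow_mul_aeval_eq_aeval_taylor_mul gwaY_mul_aeval t p

theorem exists_gwaMon_mul_gwaMon_neg (hf : f ≠ 0) (c : ℤ) :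
    ∃ C : k[X], C ≠ 0 ∧ gwaMon k f c * gwaMon k f (-c) = aeval (gwaZ k f) C := by
  obtain ⟨t, rfl | rfl⟩ := Int.eq_nat_or_neg c
  · rw [gwaMon_natCast, gwaMon_neg_natCast]
    exact exists_pow_mul_pow_eq_aeval gwaX_mul_aeval hf gwaX_mul_gwaY t
  · rw [neg_neg, gwaMon_natCast, gwaMon_neg_natCast]
    exact exists_pow_mul_pow_eq_aeval gwaY_mul_aeval (by simpa using hf) gwaY_mul_gwaX t

theorem aeval_mul_gwaMon_injective (hf : f ≠ 0) (c : ℤ) :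
    Function.Injective fun p : k[X] => aeval (gwaZ k f) p * gwaMon k f c := by
  intro p q h
  obtain ⟨C, hC, hmon⟩ := exists_gwaMon_mul_gwaMon_neg hf c
  have : aeval (gwaZ k f) (p * C) = aeval (gwaZ k f) (q * C) := by
    simpa only [map_mul, mul_assoc, hmon] using congrArg (· * gwaMon k f (-c)) h
  exact mul_right_cancel₀ hC (aeval_gwaZ_injective this)

theorem mem_gwaComp_iff {w : GWA k f} {n : ℤ} :
    w ∈ gwaComp k f n ↔ ∃ p : k[X], w = aeval (gwaZ k f) p * gwaMon k f n := by
  have : {w | ∃ p : k[X], w = aeval (gwaZ k f) p * gwaMon k f n} =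
      LinearMap.range
        (LinearMap.mulRight k (gwaMon k f n) ∘ₗ (aeval (gwaZ k f)).toLinearMap) := by
    ext; simp [eq_comm]
  rw [gwaComp, this, Submodule.span_eq]
  simp [eq_comm]

theorem aeval_mul_mem_gwaComp (p : k[X]) {w : GWA k f} {n : ℤ} (hw : w ∈ gwaComp k f n) :
    aeval (gwaZ k f) p * w ∈ gwaComp k f n := by
  obtain ⟨r, rfl⟩ := mem_gwaComp_iff.1 hw
  exact mem_gwaComp_iff.2 ⟨p * r, by rw [map_mul, mul_assoc]⟩

theorem aeval_mul_eq_mul_aeval_of_mem_gwaComp (p : k[X]) {w : GWA k f} {n : ℤ}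
    (hw : w ∈ gwaComp k f n) :
    aeval (gwaZ k f) p * w = w * aeval (gwaZ k f) (taylor (-n : k) p) := by
  obtain ⟨r, rfl⟩ := mem_gwaComp_iff.1 hw
  rw [mul_assoc, gwaMon_mul_aeval, taylor_taylor, add_neg_cancel, taylor_zero, ← mul_assoc,
    ← mul_assoc, ← map_mul, ← map_mul, mul_comm p r]

theorem eq_zero_of_mem_gwaComp_of_mul_aeval_eq_zero (hf : f ≠ 0) {w : GWA k f} {n : ℤ}
    (hw : w ∈ gwaComp k f n) {t : k[X]} (ht : t ≠ 0) (h : w * aeval (gwaZ k f) t = 0) :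
    w = 0 := by
  obtain ⟨r, rfl⟩ := mem_gwaComp_iff.1 hw
  rw [mul_assoc, gwaMon_mul_aeval, ← mul_assoc, ← map_mul] at h
  have hr : r * taylor (n : k) t = 0 := aeval_mul_gwaMon_injective hf n (h.trans (by simp))
  rw [(mul_eq_zero.1 hr).resolve_right (by simpa using ht), map_zero, zero_mul]

theorem exists_mul_aeval_eq_mul_of_mem_gwaComp (hf : f ≠ 0) {q : k[X]} (hq : q ≠ 0) (n : ℤ)
    {w : GWA k f} {d : ℤ} (hw : w ∈ gwaComp k f d) :
    ∃ t : k[X], t ≠ 0 ∧ ∃ u : GWA k f,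
      w * aeval (gwaZ k f) t = aeval (gwaZ k f) q * gwaMon k f n * u := by
  obtain ⟨r, rfl⟩ := mem_gwaComp_iff.1 hw
  obtain ⟨C, hC, hmon⟩ := exists_gwaMon_mul_gwaMon_neg hf n
  refine ⟨taylor (-d : k) (q * C), by simpa using mul_ne_zero hq hC,
    gwaMon k f (-n) * aeval (gwaZ k f) r * gwaMon k f d, ?_⟩
  rw [mul_assoc, gwaMon_mul_aeval, taylor_taylor, add_neg_cancel, taylor_zero, mul_assoc,
    ← mul_assoc (gwaMon k f n), ← mul_assoc (gwaMon k f n), hmon]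
  simp only [← mul_assoc, ← map_mul]
  rw [mul_assoc r, mul_comm (q * C)]

variable {P Q R : Submodule (GWA k f)ᵐᵒᵖ (GWA k f)}

def IsGradedRightIdeal (P : Submodule (GWA k f)ᵐᵒᵖ (GWA k f)) : Prop :=
  P = Submodule.span (GWA k f)ᵐᵒᵖ {m | m ∈ P ∧ ∃ n : ℤ, m ∈ gwaComp k f n}

namespace IsGradedRightIdeal

theorem exists_aeval_mul_gwaMon_mem (hP : IsGradedRightIdeal P) (hne : P ≠ ⊥) :
    ∃ (n : ℤ) (q : k[X]), q ≠ 0 ∧ aeval (gwaZ k f) q * gwaMon k f n ∈ P := by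
  obtain ⟨w, ⟨hwP, n, hwn⟩, hw⟩ :
      ∃ w ∈ {m | m ∈ P ∧ ∃ n : ℤ, m ∈ gwaComp k f n}, w ≠ 0 := by
    by_contra! h
    exact hne (hP.trans (Submodule.span_eq_bot.2 h))
  obtain ⟨q, rfl⟩ := mem_gwaComp_iff.1 hwn
  exact ⟨n, q, by rintro rfl; simp at hw, hwP⟩

theorem exists_aeval_mem (hf : f ≠ 0) (hP : IsGradedRightIdeal P) (hne : P ≠ ⊥) :
    ∃ W : k[X], W ≠ 0 ∧ aeval (gwaZ k f) W ∈ P := by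
  obtain ⟨n, q, hq, hqP⟩ := hP.exists_aeval_mul_gwaMon_mem hne
  obtain ⟨C, hC, hmon⟩ := exists_gwaMon_mul_gwaMon_neg hf n
  refine ⟨q * C, mul_ne_zero hq hC, ?_⟩
  simpa [mul_assoc, hmon] using Submodule.mul_mem_of_mem_op_s16 hqP (gwaMon k f (-n))

theorem aeval_mul_mem (hP : IsGradedRightIdeal P) (p : k[X]) {w : GWA k f} (hw : w ∈ P) :
    aeval (gwaZ k f) p * w ∈ P := by
  refine (hP.le.trans (Submodule.span_le.2 ?_) :
    P ≤ P.comap (LinearMap.mulLeft (GWA k f)ᵐᵒᵖ (aeval (gwaZ k f) p))) hw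
  rintro v ⟨hvP, n, hvn⟩
  simpa [aeval_mul_eq_mul_aeval_of_mem_gwaComp p hvn] using Submodule.mul_mem_of_mem_op_s16 hvP _

theorem linearMap_ext (hP : IsGradedRightIdeal P) {M : Type*} [AddCommGroup M]
    [Module (GWA k f)ᵐᵒᵖ M] {L L' : P →ₗ[(GWA k f)ᵐᵒᵖ] M}
    (h : ∀ (m : P) (n : ℤ), (m : GWA k f) ∈ gwaComp k f n → L m = L' m) : L = L' := by
  refine LinearMap.ext_on (s := {m : P | ∃ n : ℤ, (m : GWA k f) ∈ gwaComp k f n}) ?_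
    fun m ⟨n, hm⟩ => h m n hm
  apply Submodule.map_injective_of_injective P.injective_subtype
  rw [Submodule.map_span, Submodule.map_subtype_top]
  refine Eq.trans ?_ hP.symm
  congr 1
  ext w
  simp [and_comm]

end IsGradedRightIdeal

def aevalMulHom (p : k[X]) (h : ∀ w ∈ P, aeval (gwaZ k f) p * w ∈ Q) :
    P →ₗ[(GWA k f)ᵐᵒᵖ] Q :=
  (LinearMap.mulLeft _ (aeval (gwaZ k f) p)).restrict h

@[simp]
theorem aevalMulHom_apply (p : k[X]) (h : ∀ w ∈ P, aeval (gwaZ k f) p * w ∈ Q) (m : P) :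
    (aevalMulHom p h m : GWA k f) = aeval (gwaZ k f) p * m :=
  rfl

theorem isGradedHom_aevalMulHom (p : k[X]) (h : ∀ w ∈ P, aeval (gwaZ k f) p * w ∈ Q) :
    IsGradedHom k f P Q (aevalMulHom p h) :=
  fun _ _ hm => aeval_mul_mem_gwaComp p hm

theorem IsGradedHom.comp {ψ : Q →ₗ[(GWA k f)ᵐᵒᵖ] R} {φ : P →ₗ[(GWA k f)ᵐᵒᵖ] Q}
    (hψ : IsGradedHom k f Q R ψ) (hφ : IsGradedHom k f P Q φ) :
    IsGradedHom k f P R (ψ ∘ₗ φ) :=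
  fun n m hm => hψ n (φ m) (hφ n m hm)

theorem IsGradedHom.aeval_mul_apply (hf : f ≠ 0) (hP : IsGradedRightIdeal P)
    {φ : P →ₗ[(GWA k f)ᵐᵒᵖ] Q} (hφ : IsGradedHom k f P Q φ) {n : ℤ} {q q' : k[X]}
    (hq : q ≠ 0) {a : P} (ha : (a : GWA k f) = aeval (gwaZ k f) q * gwaMon k f n)
    (hφa : (φ a : GWA k f) = aeval (gwaZ k f) q' * gwaMon k f n) (m : P) :
    aeval (gwaZ k f) q * (φ m : GWA k f) = aeval (gwaZ k f) q' * m := by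
  have := hP.linearMap_ext
    (L := LinearMap.mulLeft _ (aeval (gwaZ k f) q) ∘ₗ Q.subtype ∘ₗ φ)
    (L' := LinearMap.mulLeft _ (aeval (gwaZ k f) q') ∘ₗ P.subtype) fun m d hm => ?_
  · exact LinearMap.congr_fun this m
  obtain ⟨t, ht, u, hmu⟩ := exists_mul_aeval_eq_mul_of_mem_gwaComp hf hq n hm
  have hφm : (φ m : GWA k f) * aeval (gwaZ k f) t = aeval (gwaZ k f) q' * gwaMon k f n * u := by
    have hsmul : MulOpposite.op (aeval (gwaZ k f) t) • m = MulOpposite.op u • a :=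
      Subtype.ext (by simpa [ha] using hmu)
    simpa [hφa] using congrArg (fun x => (φ x : GWA k f)) hsmul
  refine eq_of_sub_eq_zero (eq_zero_of_mem_gwaComp_of_mul_aeval_eq_zero hf
    (sub_mem (aeval_mul_mem_gwaComp q (hφ d m hm)) (aeval_mul_mem_gwaComp q' hm)) ht ?_)
  simp only [LinearMap.comp_apply, LinearMap.mulLeft_apply, Submodule.subtype_apply]
  rw [sub_mul, mul_assoc, mul_assoc, hφm, hmu]
  simp only [← mul_assoc, ← map_mul, mul_comm q q', sub_self]

def gradedHomCoeffIdeal (hQ : IsGradedRightIdeal Q) (a : P) (n : ℤ) : Ideal k[X] where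
  carrier := {q' | ∃ φ : P →ₗ[(GWA k f)ᵐᵒᵖ] Q, IsGradedHom k f P Q φ ∧
    (φ a : GWA k f) = aeval (gwaZ k f) q' * gwaMon k f n}
  add_mem' := by
    rintro _ _ ⟨φ, hφ, h⟩ ⟨ψ, hψ, h'⟩
    exact ⟨φ + ψ, fun d m hm => add_mem (hφ d m hm) (hψ d m hm), by simp [h, h', add_mul]⟩
  zero_mem' := ⟨0, fun _ _ _ => zero_mem _, by simp⟩
  smul_mem' := by
    rintro p _ ⟨φ, hφ, h⟩
    refine ⟨aevalMulHom p (fun _ => hQ.aeval_mul_mem p) ∘ₗ φ,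
      (isGradedHom_aevalMulHom p _).comp hφ, ?_⟩
    simp [h, mul_assoc]

theorem gradedHomCoeffIdeal_ne_bot (hf : f ≠ 0) (hQ : IsGradedRightIdeal Q) (hQne : Q ≠ ⊥)
    {a : P} {n : ℤ} {q : k[X]} (hq : q ≠ 0)
    (ha : (a : GWA k f) = aeval (gwaZ k f) q * gwaMon k f n) :
    gradedHomCoeffIdeal hQ a n ≠ ⊥ := by
  obtain ⟨W, hW, hWQ⟩ := hQ.exists_aeval_mem hf hQne
  have hWP : ∀ w ∈ P, aeval (gwaZ k f) W * w ∈ Q :=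
    fun w _ => Submodule.mul_mem_of_mem_op_s16 hWQ w
  refine (Submodule.ne_bot_iff _).2
    ⟨W * q, ⟨aevalMulHom W hWP, isGradedHom_aevalMulHom W hWP, ?_⟩, mul_ne_zero hW hq⟩
  simp [ha, mul_assoc]

end GWA

theorem hom_between_rank_one_projectives_general
    (k : Type) [Field k] (α : k)
    (P Q : Submodule (GWA k (X * (X + C α)))ᵐᵒᵖ (GWA k (X * (X + C α))))
    (hPne : P ≠ ⊥) (hQne : Q ≠ ⊥)
    (hPgr : P = Submodule.span (GWA k (X * (X + C α)))ᵐᵒᵖ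
      {m | m ∈ P ∧ ∃ n : ℤ, m ∈ gwaComp k (X * (X + C α)) n})
    (hQgr : Q = Submodule.span (GWA k (X * (X + C α)))ᵐᵒᵖ
      {m | m ∈ Q ∧ ∃ n : ℤ, m ∈ gwaComp k (X * (X + C α)) n}) :
    (∀ φ : ↥P →ₗ[(GWA k (X * (X + C α)))ᵐᵒᵖ] ↥Q,
      IsGradedHom k (X * (X + C α)) P Q φ →
      ∃ p₁ p₂ : Polynomial k, p₂ ≠ 0 ∧ ∀ m : ↥P,
        aeval (gwaZ k (X * (X + C α))) p₂ * (φ m : GWA k (X * (X + C α))) =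
          aeval (gwaZ k (X * (X + C α))) p₁ * (m : GWA k (X * (X + C α)))) ∧
    (∃ t₁ t₂ : Polynomial k, t₂ ≠ 0 ∧
      (∀ p : Polynomial k, ∃ φ : ↥P →ₗ[(GWA k (X * (X + C α)))ᵐᵒᵖ] ↥Q,
        IsGradedHom k (X * (X + C α)) P Q φ ∧
        ∀ m : ↥P,
          aeval (gwaZ k (X * (X + C α))) t₂ * (φ m : GWA k (X * (X + C α))) =
            aeval (gwaZ k (X * (X + C α))) (p * t₁) * (m : GWA k (X * (X + C α)))) ∧
      (∀ φ : ↥P →ₗ[(GWA k (X * (X + C α)))ᵐᵒᵖ] ↥Q,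
        IsGradedHom k (X * (X + C α)) P Q φ →
        ∃! p : Polynomial k, ∀ m : ↥P,
          aeval (gwaZ k (X * (X + C α))) t₂ * (φ m : GWA k (X * (X + C α))) =
            aeval (gwaZ k (X * (X + C α))) (p * t₁) * (m : GWA k (X * (X + C α))))) := by
  have hf : (X * (X + C α) : k[X]) ≠ 0 := (monic_X.mul (monic_X_add_C α)).ne_zero
  obtain ⟨n, q, hq, haP⟩ := IsGradedRightIdeal.exists_aeval_mul_gwaMon_mem hPgr hPne
  set a : P := ⟨_, haP⟩
  have ha : (a : GWA k (X * (X + C α))) = aeval (gwaZ k _) q * gwaMon k _ n := rfl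
  set I := gradedHomCoeffIdeal hQgr a n
  set t₁ := Submodule.IsPrincipal.generator I
  have ht₁ : t₁ ≠ 0 := (Submodule.IsPrincipal.eq_bot_iff_generator_eq_zero I).not.1
    (gradedHomCoeffIdeal_ne_bot hf hQgr hQne hq ha)
  have hcoeff (φ : P →ₗ[(GWA k (X * (X + C α)))ᵐᵒᵖ] Q) (hφ : IsGradedHom k _ P Q φ) :
      ∃ q', (φ a : GWA k (X * (X + C α))) = aeval (gwaZ k _) q' * gwaMon k _ n :=
    mem_gwaComp_iff.1 (hφ n a (mem_gwaComp_iff.2 ⟨q, rfl⟩))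
  refine ⟨fun φ hφ => ?_, t₁, q, hq, fun p => ?_, fun φ hφ => ?_⟩
  · obtain ⟨q', hφa⟩ := hcoeff φ hφ
    exact ⟨q', q, hq, hφ.aeval_mul_apply hf hPgr hq ha hφa⟩
  · obtain ⟨φ, hφ, hφa⟩ := I.mul_mem_left p (Submodule.IsPrincipal.generator_mem I)
    exact ⟨φ, hφ, hφ.aeval_mul_apply hf hPgr hq ha hφa⟩
  · obtain ⟨q', hφa⟩ := hcoeff φ hφ
    obtain ⟨p, rfl⟩ := (Submodule.IsPrincipal.mem_iff_eq_smul_generator I).1 ⟨φ, hφ, hφa⟩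
    refine ⟨p, hφ.aeval_mul_apply hf hPgr hq ha hφa, fun p' hp' => ?_⟩
    have key : aeval (gwaZ k _) (q * (p * t₁)) * gwaMon k (X * (X + C α)) n =
        aeval (gwaZ k _) (p' * t₁ * q) * gwaMon k _ n := by
      simpa only [hφa, ha, smul_eq_mul, map_mul, mul_assoc] using hp' a
    exact mul_right_cancel₀ ht₁
      (mul_left_cancel₀ hq ((aeval_mul_gwaMon_injective hf n key).trans (mul_comm _ _))).symm

set_option maxHeartbeats 1000000 in
/-- Let `P` and `Q` be finitely generated graded rank one projective right
`A(f)`-modules (`f = z(z+α)` quadratic), embedded in the graded quotient ring, i.e.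
realized as nonzero graded right ideals of `A(f)`.  Then every graded degree-zero
`A(f)`-module homomorphism `P → Q` is given by left multiplication by an element
`p₁/p₂ ∈ k(z)`, and `Hom_{gr A}(P,Q)` is a free left `k[z]`-module of rank one: there is
a single generator `t₁/t₂ ∈ k(z)` such that the homomorphisms `P → Q` are exactly the
left multiplications by the `k[z]`-multiples `p·t₁/t₂`, each arising for a unique
`p ∈ k[z]`. -/
theorem hom_between_rank_one_projectives
    (k : Type) [Field k] [IsAlgClosed k] [CharZero k] (α : k)
    (P Q : Submodule (GWA k (X * (X + C α)))ᵐᵒᵖ (GWA k (X * (X + C α))))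
    (hPne : P ≠ ⊥) (hQne : Q ≠ ⊥) (hPfg : P.FG) (hQfg : Q.FG)
    (hPgr : P = Submodule.span (GWA k (X * (X + C α)))ᵐᵒᵖ
      {m | m ∈ P ∧ ∃ n : ℤ, m ∈ gwaComp k (X * (X + C α)) n})
    (hQgr : Q = Submodule.span (GWA k (X * (X + C α)))ᵐᵒᵖ
      {m | m ∈ Q ∧ ∃ n : ℤ, m ∈ gwaComp k (X * (X + C α)) n})
    (hPproj : Module.Projective (GWA k (X * (X + C α)))ᵐᵒᵖ ↥P)
    (hQproj : Module.Projective (GWA k (X * (X + C α)))ᵐᵒᵖ ↥Q) :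
    (∀ φ : ↥P →ₗ[(GWA k (X * (X + C α)))ᵐᵒᵖ] ↥Q,
      IsGradedHom k (X * (X + C α)) P Q φ →
      ∃ p₁ p₂ : Polynomial k, p₂ ≠ 0 ∧ ∀ m : ↥P,
        aeval (gwaZ k (X * (X + C α))) p₂ * (φ m : GWA k (X * (X + C α))) =
          aeval (gwaZ k (X * (X + C α))) p₁ * (m : GWA k (X * (X + C α)))) ∧
    (∃ t₁ t₂ : Polynomial k, t₂ ≠ 0 ∧
      (∀ p : Polynomial k, ∃ φ : ↥P →ₗ[(GWA k (X * (X + C α)))ᵐᵒᵖ] ↥Q,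
        IsGradedHom k (X * (X + C α)) P Q φ ∧
        ∀ m : ↥P,
          aeval (gwaZ k (X * (X + C α))) t₂ * (φ m : GWA k (X * (X + C α))) =
            aeval (gwaZ k (X * (X + C α))) (p * t₁) * (m : GWA k (X * (X + C α)))) ∧
      (∀ φ : ↥P →ₗ[(GWA k (X * (X + C α)))ᵐᵒᵖ] ↥Q,
        IsGradedHom k (X * (X + C α)) P Q φ →
        ∃! p : Polynomial k, ∀ m : ↥P,
          aeval (gwaZ k (X * (X + C α))) t₂ * (φ m : GWA k (X * (X + C α))) =
            aeval (gwaZ k (X * (X + C α))) (p * t₁) * (m : GWA k (X * (X + C α))))) :=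
  hom_between_rank_one_projectives_general k α P Q hPne hQne hPgr hQgr

end
end

section
/- Let C be an abelian k-linear category, I = {I_1, …, I_n} a finite set of objects, and D the full subcategory of finite direct sums of elements of I. Suppose Hom_C(C,D) is finite-dimensional over k for all C ∈ C and D ∈ D, and D is closed under subobjects. Then every object M of C has a unique smallest subobject N ⊆ M such that M/N lies in D. -/
/-!
Choosing a basis of each finite-dimensional space `Hom(M, I i)` gives one map
`φ : M ⟶ ⨁ I`, a sum of copies of the `I i`. The quotient `M / ker φ` is the coimage of `φ`,
which embeds in that sum and so lies in `D`. Conversely `ker φ` is killed by every basis vector,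
hence by every map `M ⟶ I i`, hence by every map from `M` into a sum of the `I i`; applied to
`M ⟶ M / N'` this gives `ker φ ≤ N'` whenever `M / N'` lies in `D`.
-/

open CategoryTheory CategoryTheory.Limits

namespace CategoryTheory

section Abelian

variable {C : Type*} [Category C] [Abelian C]

theorem Subobject.le_of_arrow_comp_cokernel_π_eq_zero {M : C} {N N' : Subobject M}
    (h : N.arrow ≫ cokernel.π N'.arrow = 0) : N ≤ N' :=
  Subobject.le_of_comm (Abelian.monoLift N'.arrow N.arrow h) (Abelian.monoLift_comp _ _ _)

instance mono_cokernel_desc_kernelSubobject_arrow {X Y : C} (f : X ⟶ Y) :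
    Mono (cokernel.desc (kernelSubobject f).arrow f (kernelSubobject_arrow_comp f)) := by
  let e : cokernel (kernelSubobject f).arrow ≅ Abelian.coimage f :=
    cokernelIsoOfEq (kernelSubobject_arrow f).symm ≪≫ cokernelEpiComp _ _
  have h : cokernel.desc _ f (kernelSubobject_arrow_comp f) =
      e.hom ≫ Abelian.factorThruCoimage f := by
    ext
    simp [e]
  rw [h]
  infer_instance

end Abelian

section Preadditive

variable {C : Type*} [Category C] [Preadditive C]

theorem comp_eq_zero_of_comp_basis_eq_zero {k : Type*} [Semiring k] [Linear k C]
    {A M Y : C} {ι : Type*} (b : Module.Basis ι k (M ⟶ Y)) {a : A ⟶ M} (h : ∀ t, a ≫ b t = 0) (f : M ⟶ Y) :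
    a ≫ f = 0 :=
  LinearMap.congr_fun (b.ext (f₁ := Linear.leftComp k Y a) (f₂ := 0) h) f

theorem comp_eq_zero_of_iso_biproduct {A M Y : C} {J : Type*} [Finite J] {F : J → C}
    [HasBiproduct F] (e : Y ≅ ⨁ F) {a : A ⟶ M} (h : ∀ j (f : M ⟶ F j), a ≫ f = 0)
    (f : M ⟶ Y) : a ≫ f = 0 := by
  rw [← cancel_mono e.hom, zero_comp]
  ext j
  simpa using h j (f ≫ e.hom ≫ biproduct.π F j)

end Preadditive

section BasisLift

variable (k : Type*) [Field k] {C : Type*} [Category C] [Preadditive C] [Linear k C]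
  [HasFiniteBiproducts C] {ι : Type*} [Finite ι] (F : ι → C) (M : C)
  [∀ i, FiniteDimensional k (M ⟶ F i)]

noncomputable def biproductLiftFinBasis :
    M ⟶ ⨁ fun p : Σ i, Fin (Module.finrank k (M ⟶ F i)) => F p.1 :=
  biproduct.lift fun p => Module.finBasis k (M ⟶ F p.1) p.2

variable {k F M} in
theorem comp_eq_zero_of_comp_biproductLiftFinBasis_eq_zero {A : C} {a : A ⟶ M}
    (h : a ≫ biproductLiftFinBasis k F M = 0) (i : ι) (f : M ⟶ F i) : a ≫ f = 0 := by
  refine comp_eq_zero_of_comp_basis_eq_zero (Module.finBasis k (M ⟶ F i)) (fun t => ?_) f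
  simpa [biproductLiftFinBasis] using h =≫ biproduct.π _ ⟨i, t⟩

end BasisLift

end CategoryTheory

/-- Let `C` be an abelian `k`-linear category, `I : Fin n → C` a finite set
of objects, and `D` the full subcategory of finite direct sums of the `I i` (with repeats
allowed, closed under isomorphism).  Suppose `Hom_C(X, D)` is finite-dimensional over `k`
for every `X : C` and every `D` in `D`, and that `D` is closed under subobjects.  Then
every object `M` of `C` has a unique smallest subobject `N ⊆ M` such that `M/N` lies in
`D`.  (The instance `[HasFiniteBiproducts C]` always holds in an abelian category; it is
included so that the finite direct sums `⨁` can be written.) -/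
theorem exists_smallest_subobject_with_quotient_in_sums
    (k : Type*) [Field k] {C : Type*} [Category C] [Abelian C] [Linear k C]
    [HasFiniteBiproducts C]
    (n : ℕ) (I : Fin n → C)
    (D : C → Prop)
    (hD : ∀ X : C, D X ↔ ∃ (m : ℕ) (g : Fin m → Fin n), Nonempty (X ≅ ⨁ fun j => I (g j)))
    (hfin : ∀ (X Y : C), D Y → FiniteDimensional k (X ⟶ Y))
    (hsub : ∀ (X Y : C) (f : X ⟶ Y), D Y → Mono f → D X) :
    ∀ M : C, ∃ N : Subobject M,
      D (cokernel N.arrow) ∧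
      ∀ N' : Subobject M, D (cokernel N'.arrow) → N ≤ N' := by
  have hsum {J : Type} [Fintype J] (g : J → Fin n) : D (⨁ fun j => I (g j)) :=
    (hD _).mpr ⟨_, g ∘ (Fintype.equivFin J).symm,
      ⟨biproduct.whiskerEquiv (Fintype.equivFin J) fun _ => eqToIso (by simp)⟩⟩
  have hI (i : Fin n) : D (I i) :=
    (hD _).mpr ⟨1, fun _ => i, ⟨(biproductUniqueIso fun _ : Fin 1 => I i).symm⟩⟩
  intro M
  have : ∀ i, FiniteDimensional k (M ⟶ I i) := fun i => hfin M (I i) (hI i)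
  let φ := biproductLiftFinBasis k I M
  refine ⟨kernelSubobject φ, hsub _ _ _ (hsum _) (mono_cokernel_desc_kernelSubobject_arrow φ),
    fun N' hN' => Subobject.le_of_arrow_comp_cokernel_π_eq_zero ?_⟩
  obtain ⟨m, g, ⟨e⟩⟩ := (hD _).mp hN'
  exact comp_eq_zero_of_iso_biproduct e (fun j =>
    comp_eq_zero_of_comp_biproductLiftFinBasis_eq_zero (kernelSubobject_arrow_comp φ) (g j)) _
end
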